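/- Let a : ℝ → [0,∞) satisfy C₁|s|^p − C₂ ≤ a(s) for all s with p > 1, C₁, C₂ > 0, and let f₁, f₂ ∈ C¹([0,T]). Define E(t,x) := a(x₁ − f₁(t)) + a(f₂(t) − x_d) + Σ_{i=1}^{d−1} a(x_{i+1} − x_i). Then there exist constants C₃, C₄ > 0 such that C₃|x|^p − C₄ ≤ E(t,x) for all (t,x) ∈ [0,T] × ℝ^d, where |x| is the Euclidean norm on ℝ^d. -/

import Mathlib

/-!
Telescoping along the chain `f₁ t, x 0, x 1, …, x d` bounds every coordinate of `x`, hence `‖x‖`, by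
a multiple of `|f₁ t| + |x 0 - f₁ t| + ∑ |x (i+1) - x i|`, and convexity of `s ↦ s ^ p` turns this
into a bound on `‖x‖ ^ p` by the sum of the `p`-th powers of these increments. The coercivity of `a`
controls all increments but `f₁ t`, which is bounded on the compact `[0, T]`; the nonnegative term
`a (f₂ t - x d)` is discarded.
-/

open Set

theorem abs_le_abs_zero_add_sum_abs_sub {n : ℕ} (x : Fin (n + 1) → ℝ) (j : Fin (n + 1)) :
    |x j| ≤ |x 0| + ∑ i : Fin n, |x i.succ - x i.castSucc| := by
  induction n with
  | zero => rw [Fin.fin_one_eq_zero j]; simp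
  | succ n ih =>
    have hstep := ih (x ∘ Fin.castSucc)
    simp only [Function.comp_apply, Fin.castSucc_zero, ← Fin.succ_castSucc] at hstep
    rw [Fin.sum_univ_castSucc]
    have hlast : 0 ≤ |x (Fin.last n).succ - x (Fin.last n).castSucc| := abs_nonneg _
    induction j using Fin.lastCases with
    | last =>
      have htri := abs_sub_abs_le_abs_sub (x (Fin.last n).succ) (x (Fin.last n).castSucc)
      rw [← Fin.succ_last]
      linarith [hstep (Fin.last n)]
    | cast j => linarith [hstep j]

theorem EuclideanSpace.norm_le_sum_abs {ι : Type*} [Fintype ι] (x : EuclideanSpace ℝ ι) :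
    ‖x‖ ≤ ∑ i, |x i| := by
  rw [EuclideanSpace.norm_eq]
  calc √(∑ i, ‖x i‖ ^ 2) ≤ √((∑ i, ‖x i‖) ^ 2) :=
        Real.sqrt_le_sqrt (Finset.sum_sq_le_sq_sum_of_nonneg fun i _ => norm_nonneg _)
    _ = ∑ i, |x i| := Real.sqrt_sq (Finset.sum_nonneg fun i _ => norm_nonneg _)

theorem add_add_sum_rpow_le {n : ℕ} {p a b : ℝ} {f : Fin n → ℝ} (hp : 1 ≤ p)
    (ha : 0 ≤ a) (hb : 0 ≤ b) (hf : ∀ i, 0 ≤ f i) :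
    (a + b + ∑ i, f i) ^ p ≤ ((n : ℝ) + 2) ^ (p - 1) * (a ^ p + b ^ p + ∑ i, f i ^ p) := by
  have key := Real.rpow_sum_le_const_mul_sum_rpow_of_nonneg (s := Finset.univ)
    (f := Fin.cons a (Fin.cons b f)) hp (by
      intro i _
      induction i using Fin.cases with
      | zero => exact ha
      | succ i => induction i using Fin.cases with
        | zero => exact hb
        | succ i => exact hf i)
  simpa [Fin.sum_univ_succ, add_assoc, add_comm 2 (n : ℝ)] using key

theorem EuclideanSpace.norm_rpow_le_increments_rpow {n : ℕ} {p : ℝ} (hp : 1 ≤ p)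
    (x : EuclideanSpace ℝ (Fin (n + 1))) (c : ℝ) :
    ‖x‖ ^ p ≤ ((n : ℝ) + 1) ^ p * ((n : ℝ) + 2) ^ (p - 1) *
      (|c| ^ p + |x 0 - c| ^ p + ∑ i : Fin n, |x i.succ - x i.castSucc| ^ p) := by
  set B := |c| + |x 0 - c| + ∑ i : Fin n, |x i.succ - x i.castSucc|
  have hcoord (j : Fin (n + 1)) : |x j| ≤ B := by
    have := abs_le_abs_zero_add_sum_abs_sub (x ·) j
    have := abs_sub_abs_le_abs_sub (x 0) c
    linarith
  have hnorm : ‖x‖ ≤ ((n : ℝ) + 1) * B := by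
    simpa using (EuclideanSpace.norm_le_sum_abs x).trans (Finset.sum_le_sum fun j _ => hcoord j)
  calc ‖x‖ ^ p ≤ (((n : ℝ) + 1) * B) ^ p := by gcongr
    _ = ((n : ℝ) + 1) ^ p * B ^ p := Real.mul_rpow (by positivity) (by positivity)
    _ ≤ _ := by
      rw [mul_assoc]
      gcongr
      exact add_add_sum_rpow_le hp (abs_nonneg _) (abs_nonneg _) fun i => abs_nonneg _

theorem stmt9_general (d : ℕ) (T : ℝ)
    (a : ℝ → ℝ) (ha0 : ∀ s, 0 ≤ a s)
    (C₁ C₂ p : ℝ) (hC₁ : 0 < C₁) (hC₂ : 0 < C₂) (hp : 1 < p)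
    (hlow : ∀ s, C₁ * |s| ^ p - C₂ ≤ a s)
    (f₁ f₂ f₁' : ℝ → ℝ)
    (hf₁ : ∀ t ∈ Icc (0:ℝ) T, HasDerivAt f₁ (f₁' t) t) :
    ∃ C₃ > (0:ℝ), ∃ C₄ > (0:ℝ), ∀ t ∈ Icc (0:ℝ) T,
      ∀ x : EuclideanSpace ℝ (Fin (d+1)),
        C₃ * ‖x‖ ^ p - C₄
          ≤ a (x 0 - f₁ t) + a (f₂ t - x (Fin.last d))
            + ∑ i : Fin d, a (x i.succ - x i.castSucc) := by
  obtain ⟨M, hM⟩ := isCompact_Icc.exists_bound_of_continuousOn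
    fun t ht => (hf₁ t ht).continuousAt.continuousWithinAt
  set K : ℝ := ((d : ℝ) + 1) ^ p * ((d : ℝ) + 2) ^ (p - 1)
  have hK : 0 < K := by positivity
  refine ⟨C₁ / K, by positivity, C₁ * |M| ^ p + (d + 1) * C₂, by positivity, fun t ht x => ?_⟩
  have hf₁t : |f₁ t| ^ p ≤ |M| ^ p :=
    Real.rpow_le_rpow (abs_nonneg _) ((hM t ht).trans (le_abs_self M)) (by linarith)
  have hnorm : C₁ / K * ‖x‖ ^ p ≤ C₁ * (|f₁ t| ^ p + |x 0 - f₁ t| ^ p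
      + ∑ i : Fin d, |x i.succ - x i.castSucc| ^ p) := by
    rw [div_mul_eq_mul_div, div_le_iff₀' hK, mul_left_comm]
    exact mul_le_mul_of_nonneg_left (EuclideanSpace.norm_rpow_le_increments_rpow hp.le x (f₁ t)) hC₁.le
  have hsteps : C₁ * ∑ i : Fin d, |x i.succ - x i.castSucc| ^ p - d * C₂
      ≤ ∑ i : Fin d, a (x i.succ - x i.castSucc) := by
    simpa [Finset.sum_sub_distrib, Finset.mul_sum] using
      Finset.sum_le_sum (s := Finset.univ) fun (i : Fin d) _ => hlow (x i.succ - x i.castSucc)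
  linarith [hlow (x 0 - f₁ t), ha0 (f₂ t - x (Fin.last d)), mul_le_mul_of_nonneg_left hf₁t hC₁.le]

/-- If `a ≥ 0` satisfies `C₁|s|^p − C₂ ≤ a(s)` with `p > 1` and
`f₁, f₂ ∈ C¹([0,T])`, then the thin-rod energy
`E(t,x) = a(x₁ − f₁(t)) + a(f₂(t) − x_d) + Σ a(x_{i+1} − x_i)` satisfies
`C₃|x|^p − C₄ ≤ E(t,x)` on `[0,T] × ℝ^d` for some `C₃, C₄ > 0`, with `|x|` the
Euclidean norm (here the dimension is `d+1`). -/
theorem stmt9 (d : ℕ) (T : ℝ) (hT : 0 < T)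
    (a : ℝ → ℝ) (ha0 : ∀ s, 0 ≤ a s)
    (C₁ C₂ p : ℝ) (hC₁ : 0 < C₁) (hC₂ : 0 < C₂) (hp : 1 < p)
    (hlow : ∀ s, C₁ * |s| ^ p - C₂ ≤ a s)
    (f₁ f₂ f₁' f₂' : ℝ → ℝ)
    (hf₁ : ∀ t ∈ Icc (0:ℝ) T, HasDerivAt f₁ (f₁' t) t)
    (hf₂ : ∀ t ∈ Icc (0:ℝ) T, HasDerivAt f₂ (f₂' t) t)
    (hf₁c : ContinuousOn f₁' (Icc (0:ℝ) T))
    (hf₂c : ContinuousOn f₂' (Icc (0:ℝ) T)) :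
    ∃ C₃ > (0:ℝ), ∃ C₄ > (0:ℝ), ∀ t ∈ Icc (0:ℝ) T,
      ∀ x : EuclideanSpace ℝ (Fin (d+1)),
        C₃ * ‖x‖ ^ p - C₄
          ≤ a (x 0 - f₁ t) + a (f₂ t - x (Fin.last d))
            + ∑ i : Fin d, a (x i.succ - x i.castSucc) :=
  stmt9_general d T a ha0 C₁ C₂ p hC₁ hC₂ hp hlow f₁ f₂ f₁' hf₁
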